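/- (Viviani (c)) Let k ≥ 3, r > 0, A ∈ ℝ², and A_j = A + r • (cos(2πj/k), sin(2πj/k)) for j = 0, …, k−1, the vertices of a regular k-gon with center A. For each j let B_j be a point on the segment from A to A_j, i.e., B_j = A + t_j • (A_j − A) with t_j ∈ [0, 1]. Then for every B ∈ ℝ² with B ≠ A, Σ_{j=0}^{k−1} ‖A − B_j‖ < Σ_{j=0}^{k−1} ‖B − B_j‖; that is, A is the Fermat point of B_0, …, B_{k−1}. -/

import Mathlib

/-!
Write `B' j = A + s j • u j` with `s j = t j * r ≥ 0` and `u j` the unit vectors of the polygon,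
which sum to zero (they are the `k`-th roots of unity). By Cauchy–Schwarz,
`‖B - B' j‖ ≥ ⟪B' j - B, u j⟫ = ⟪A - B, u j⟫ + s j`; summing over `j` the inner products cancel
and leave `∑ s j = ∑ ‖A - B' j‖`. Equality would force `B - A` to be parallel to both `u 0` and
`u 1`, which are linearly independent.
-/

open Real RealInnerProductSpace

section UnitStar

variable {E : Type*} [NormedAddCommGroup E] [InnerProductSpace ℝ E]

lemma inner_add_smul_sub_of_norm_eq_one {u : E} (hu : ‖u‖ = 1) (A B : E) (s : ℝ) :
    ⟪A + s • u - B, u⟫ = ⟪A - B, u⟫ + s := by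
  rw [add_sub_right_comm, inner_add_left, real_inner_smul_left, real_inner_self_eq_norm_sq, hu,
    one_pow, mul_one]

lemma inner_sub_add_le_norm_sub_add_smul {u : E} (hu : ‖u‖ = 1) (A B : E) (s : ℝ) :
    ⟪A - B, u⟫ + s ≤ ‖B - (A + s • u)‖ :=
  calc ⟪A - B, u⟫ + s = ⟪A + s • u - B, u⟫ := (inner_add_smul_sub_of_norm_eq_one hu A B s).symm
    _ ≤ ‖A + s • u - B‖ * ‖u‖ := real_inner_le_norm _ _
    _ = ‖B - (A + s • u)‖ := by rw [hu, mul_one, norm_sub_rev]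

lemma exists_sub_eq_smul_of_norm_sub_add_smul_eq {u : E} (hu : ‖u‖ = 1) {A B : E} {s : ℝ}
    (h : ‖B - (A + s • u)‖ = ⟪A - B, u⟫ + s) : ∃ c : ℝ, B - A = c • u := by
  set x := A + s • u - B
  have hx : ⟪x, u⟫ = ‖x‖ * ‖u‖ := by
    rw [hu, mul_one, norm_sub_rev, h, inner_add_smul_sub_of_norm_eq_one hu]
  have hxu : x = ‖x‖ • u := by simpa [hu] using inner_eq_norm_mul_iff_real.mp hx
  refine ⟨s - ‖x‖, ?_⟩
  rw [sub_smul, ← hxu]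
  simp only [x]
  abel

theorem sum_norm_sub_center_lt {ι : Type*} [Fintype ι] {u : ι → E} (hu : ∀ j, ‖u j‖ = 1)
    (hsum : ∑ j, u j = 0) {s : ι → ℝ} (hs : ∀ j, 0 ≤ s j) {i i' : ι}
    (hii' : LinearIndependent ℝ ![u i, u i']) {A B : E} (hB : B ≠ A) :
    ∑ j, ‖A - (A + s j • u j)‖ < ∑ j, ‖B - (A + s j • u j)‖ := by
  have hle := fun j => inner_sub_add_le_norm_sub_add_smul (hu j) A B (s j)
  have hstrict : ∃ j ∈ Finset.univ, ⟪A - B, u j⟫ + s j < ‖B - (A + s j • u j)‖ := by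
    by_contra! h
    obtain ⟨c, hc⟩ := exists_sub_eq_smul_of_norm_sub_add_smul_eq (hu i)
      ((h i (Finset.mem_univ i)).antisymm (hle i))
    obtain ⟨c', hc'⟩ := exists_sub_eq_smul_of_norm_sub_add_smul_eq (hu i')
      ((h i' (Finset.mem_univ i')).antisymm (hle i'))
    have hc0 := (LinearIndependent.pair_iff.mp hii' c (-c')
      (by rw [neg_smul, ← hc, ← hc', add_neg_cancel])).1
    exact hB (sub_eq_zero.mp (by rw [hc, hc0, zero_smul]))
  calc ∑ j, ‖A - (A + s j • u j)‖ = ∑ j, (⟪A - B, u j⟫ + s j) := by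
        rw [Finset.sum_add_distrib, ← inner_sum, hsum, inner_zero_right, zero_add]
        refine Finset.sum_congr rfl fun j _ => ?_
        rw [sub_add_cancel_left, norm_neg, norm_smul, hu, mul_one, norm_of_nonneg (hs j)]
    _ < ∑ j, ‖B - (A + s j • u j)‖ := Finset.sum_lt_sum (fun j _ => hle j) hstrict

end UnitStar

noncomputable def unitVecOfAngle (θ : ℝ) : EuclideanSpace ℝ (Fin 2) := !₂[cos θ, sin θ]

lemma norm_unitVecOfAngle (θ : ℝ) : ‖unitVecOfAngle θ‖ = 1 := by
  simp [unitVecOfAngle, EuclideanSpace.norm_eq, Fin.sum_univ_two]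

lemma linearIndependent_unitVecOfAngle_pair {a b : ℝ} (h : sin (b - a) ≠ 0) :
    LinearIndependent ℝ ![unitVecOfAngle a, unitVecOfAngle b] := by
  refine LinearIndependent.pair_iff.mpr fun s t hst => ?_
  have h0 := congrArg (· 0) hst
  have h1 := congrArg (· 1) hst
  simp only [unitVecOfAngle, PiLp.add_apply, PiLp.smul_apply, smul_eq_mul, PiLp.zero_apply,
    Matrix.cons_val_zero, Matrix.cons_val_one, Matrix.cons_val_fin_one] at h0 h1
  rw [sin_sub] at h
  constructor
  · apply (mul_eq_zero.mp _).resolve_right h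
    linear_combination sin b * h0 - cos b * h1
  · apply (mul_eq_zero.mp _).resolve_right h
    linear_combination cos a * h1 - sin a * h0

lemma sum_exp_two_pi_mul_I_div_eq_zero {k : ℕ} (hk : 2 ≤ k) :
    ∑ j ∈ Finset.range k, Complex.exp (((2 * π * j / k : ℝ) : ℂ) * Complex.I) = 0 := by
  rw [← (Complex.isPrimitiveRoot_exp k (by omega)).geom_sum_eq_zero (by omega)]
  refine Finset.sum_congr rfl fun j _ => ?_
  rw [← Complex.exp_nat_mul]
  push_cast
  ring_nf

lemma sum_unitVecOfAngle_eq_zero {k : ℕ} (hk : 2 ≤ k) :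
    ∑ j : Fin k, unitVecOfAngle (2 * π * j / k) = 0 := by
  have hsum := sum_exp_two_pi_mul_I_div_eq_zero hk
  ext i
  fin_cases i
  · have hre := congrArg Complex.re hsum
    rw [Complex.re_sum] at hre
    simp only [Complex.exp_ofReal_mul_I_re] at hre
    simpa [unitVecOfAngle, Fin.sum_univ_eq_sum_range (fun j : ℕ => cos (2 * π * j / k))] using hre
  · have him := congrArg Complex.im hsum
    rw [Complex.im_sum] at him
    simp only [Complex.exp_ofReal_mul_I_im] at him
    simpa [unitVecOfAngle, Fin.sum_univ_eq_sum_range (fun j : ℕ => sin (2 * π * j / k))] using him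

lemma sin_two_pi_div_pos {k : ℕ} (hk : 3 ≤ k) : 0 < sin (2 * π / k) := by
  have hk3 : (3 : ℝ) ≤ k := by exact_mod_cast hk
  apply sin_pos_of_pos_of_lt_pi (by positivity)
  rw [div_lt_iff₀ (by positivity)]
  nlinarith [pi_pos]

theorem regular_polygon_center_fermat_of_segments (k : ℕ) (hk : 3 ≤ k) (r : ℝ) (hr : 0 < r)
    (A : EuclideanSpace ℝ (Fin 2))
    (N : Fin k → EuclideanSpace ℝ (Fin 2))
    (hN : ∀ j : Fin k,
      N j = ![Real.cos (2 * π * (j : ℝ) / k), Real.sin (2 * π * (j : ℝ) / k)])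
    (V : Fin k → EuclideanSpace ℝ (Fin 2))
    (hV : ∀ j : Fin k, V j = A + r • N j)
    (t : Fin k → ℝ) (ht : ∀ j, t j ∈ Set.Icc (0 : ℝ) 1)
    (B' : Fin k → EuclideanSpace ℝ (Fin 2))
    (hB' : ∀ j, B' j = A + t j • (V j - A)) :
    ∀ B : EuclideanSpace ℝ (Fin 2), B ≠ A →
      (∑ j, ‖A - B' j‖) < (∑ j, ‖B - B' j‖) := by
  intro B hB
  have hN' : ∀ j, N j = unitVecOfAngle (2 * π * j / k) := fun j => WithLp.ofLp_injective 2 (hN j)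
  have hB'N : ∀ j, B' j = A + (t j * r) • unitVecOfAngle (2 * π * j / k) := fun j => by
    rw [hB', hV, add_sub_cancel_left, smul_smul, hN']
  simp only [hB'N]
  refine sum_norm_sub_center_lt (fun j => norm_unitVecOfAngle _)
    (sum_unitVecOfAngle_eq_zero (by omega)) (fun j => mul_nonneg (ht j).1 hr.le)
    (i := ⟨0, by omega⟩) (i' := ⟨1, by omega⟩) (linearIndependent_unitVecOfAngle_pair ?_) hB
  simpa using (sin_two_pi_div_pos hk).ne'
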